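/- arXiv:1111.6294 — 3 statements merged into one kernel-verified Lean document; each statement's English description precedes it below -/
import Mathlib

section
/- Let A → B → C be an exact triangle in a triangulated category with B = B₁ ⊕ B₂. If A₀ → A → B₂ is an exact triangle completing the composite A → B → B₂ (where the second map is the projection), then there is an exact triangle A₀ → B₁ → C. -/
/-!
`B₁ → B₁ ⊞ B₂ → B₂ → B₁⟦1⟧` is distinguished, so `B₁` is the fiber of the projection. The
octahedron on the composite `A → B₁ ⊞ B₂ → B₂` relates the cones `Cobj`, `A₀⟦1⟧` and `B₁⟦1⟧` of
`f`, `f ≫ biprod.snd` and `biprod.snd` by a distinguished triangle; rotating it back twice gives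
`A₀ → B₁ → Cobj`.
-/

open CategoryTheory CategoryTheory.Limits CategoryTheory.Pretriangulated

namespace CategoryTheory.Triangulated

variable {C : Type*} [Category C] [Preadditive C] [HasZeroObject C] [HasShift C ℤ]
  [∀ n : ℤ, (shiftFunctor C n).Additive] [Pretriangulated C]

lemma distinguished_of_rotate_rotate {X Y Z : C} (u : X ⟶ Y) (v : Y ⟶ Z) (w : Z ⟶ X⟦(1 : ℤ)⟧)
    (h : Triangle.mk w (-u⟦(1 : ℤ)⟧') (-v⟦(1 : ℤ)⟧') ∈ distTriang C) :
    Triangle.mk u v w ∈ distTriang C := by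
  rwa [rotate_distinguished_triangle, rotate_distinguished_triangle]

lemma exists_distinguished_of_fiber_comp [IsTriangulated C] {A B B₁ B₂ Z A₀ : C}
    {f : A ⟶ B} {g : B ⟶ Z} {h : Z ⟶ A⟦(1 : ℤ)⟧} (hT : Triangle.mk f g h ∈ distTriang C)
    {ι : B₁ ⟶ B} {p : B ⟶ B₂} {e : B₂ ⟶ B₁⟦(1 : ℤ)⟧} (hp : Triangle.mk ι p e ∈ distTriang C)
    {i : A₀ ⟶ A} {δ : B₂ ⟶ A₀⟦(1 : ℤ)⟧} (hT₀ : Triangle.mk i (f ≫ p) δ ∈ distTriang C) :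
    ∃ (u : A₀ ⟶ B₁) (w : Z ⟶ A₀⟦(1 : ℤ)⟧), Triangle.mk u (ι ≫ g) w ∈ distTriang C := by
  have hp' : Triangle.mk p e (-ι⟦(1 : ℤ)⟧') ∈ distTriang C := rot_of_distTriang _ hp
  have hT₀' : Triangle.mk (f ≫ p) δ (-i⟦(1 : ℤ)⟧') ∈ distTriang C := rot_of_distTriang _ hT₀
  let H := someOctahedron rfl hT hp' hT₀'
  -- `H.m₃ : A₀⟦1⟧ ⟶ B₁⟦1⟧` is, up to sign, the shift of the wanted `u`.
  refine ⟨-(shiftFunctor C (1 : ℤ)).preimage H.m₃, H.m₁, distinguished_of_rotate_rotate _ _ _ ?_⟩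
  convert H.mem using 2 <;> simp

end CategoryTheory.Triangulated

/-- Let `A → B → C` be a distinguished (exact) triangle in a triangulated
category with `B = B₁ ⊞ B₂` a biproduct. If `A₀ → A → B₂` is a distinguished triangle
completing the composite `A → B → B₂` (second map the biproduct projection), then there is a
distinguished triangle `A₀ → B₁ → C`, where the map `B₁ → C` is obtained by composing with the
biproduct inclusion. (An application of the octahedral axiom.) -/
theorem stmt0 {C : Type*} [Category C] [Preadditive C] [HasZeroObject C]
    [HasShift C ℤ] [∀ n : ℤ, (CategoryTheory.shiftFunctor C n).Additive]
    [Pretriangulated C] [IsTriangulated C] [HasBinaryBiproducts C]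
    (A B₁ B₂ Cobj A₀ : C)
    (f : A ⟶ B₁ ⊞ B₂) (g : B₁ ⊞ B₂ ⟶ Cobj) (h : Cobj ⟶ A⟦(1 : ℤ)⟧)
    (hT : Triangle.mk f g h ∈ distTriang C)
    (i : A₀ ⟶ A) (δ : B₂ ⟶ A₀⟦(1 : ℤ)⟧)
    (hT₀ : Triangle.mk i (f ≫ biprod.snd) δ ∈ distTriang C) :
    ∃ (u : A₀ ⟶ B₁) (w : Cobj ⟶ A₀⟦(1 : ℤ)⟧),
      Triangle.mk u (biprod.inl ≫ g) w ∈ distTriang C := by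
  exact Triangulated.exists_distinguished_of_fiber_comp hT
    (binaryBiproductTriangle_distinguished B₁ B₂) hT₀
end

section
/- Let A → B → C be an exact triangle in a triangulated category with B = B₁ ⊕ B₂. If B₁ → C → C₀ is an exact triangle completing the composite B₁ → B → C, then there is an exact triangle A → B₂ → C₀. -/
open CategoryTheory CategoryTheory.Limits CategoryTheory.Pretriangulated

namespace CategoryTheory.Triangulated

variable {C : Type*} [Category C] [Preadditive C] [HasZeroObject C] [HasShift C ℤ]
  [∀ n : ℤ, (shiftFunctor C n).Additive] [Pretriangulated C] [IsTriangulated C]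

/-- The octahedron on `B₁ ⟶ B ⟶ X` has faces `B₁ → B → B₂`, `B → X → A⟦1⟧` and `B₁ → X → X₀`;
its fourth face `B₂ → X₀ → A⟦1⟧` is the rotation of a triangle on `f ≫ v`. -/
lemma exists_distTriang_mk_comp_of_octahedron {A B B₁ B₂ X X₀ : C}
    {f : A ⟶ B} {g : B ⟶ X} {h : X ⟶ A⟦(1 : ℤ)⟧} (hT : Triangle.mk f g h ∈ distTriang C)
    {u : B₁ ⟶ B} {v : B ⟶ B₂} {w : B₂ ⟶ B₁⟦(1 : ℤ)⟧} (hu : Triangle.mk u v w ∈ distTriang C)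
    {j : X ⟶ X₀} {δ : X₀ ⟶ B₁⟦(1 : ℤ)⟧} (hT₀ : Triangle.mk (u ≫ g) j δ ∈ distTriang C) :
    ∃ (v' : B₂ ⟶ X₀) (w' : X₀ ⟶ A⟦(1 : ℤ)⟧), Triangle.mk (f ≫ v) v' w' ∈ distTriang C := by
  have hT' : Triangle.mk g h (-f⟦(1 : ℤ)⟧') ∈ distTriang C := rot_of_distTriang _ hT
  let H := someOctahedron rfl hu hT' hT₀
  refine ⟨H.m₁, H.m₃, (rotate_distinguished_triangle _).2 ?_⟩
  have hmor₃ : -(f ≫ v)⟦(1 : ℤ)⟧' = (-f⟦(1 : ℤ)⟧') ≫ v⟦(1 : ℤ)⟧' := by simp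
  change Triangle.mk H.m₁ H.m₃ (-(f ≫ v)⟦(1 : ℤ)⟧') ∈ distTriang C
  rw [hmor₃]
  exact H.mem

end CategoryTheory.Triangulated

/-- Let `A → B → C` be a distinguished (exact) triangle in a triangulated
category with `B = B₁ ⊞ B₂` a biproduct. If `B₁ → C → C₀` is a distinguished triangle
completing the composite `B₁ → B → C` (first map the biproduct inclusion), then there is a
distinguished triangle `A → B₂ → C₀`, where the map `A → B₂` is the composite of `f` with the
biproduct projection. (An application of the octahedral axiom.) -/
theorem stmt1 {C : Type*} [Category C] [Preadditive C] [HasZeroObject C]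
    [HasShift C ℤ] [∀ n : ℤ, (CategoryTheory.shiftFunctor C n).Additive]
    [Pretriangulated C] [IsTriangulated C] [HasBinaryBiproducts C]
    (A B₁ B₂ Cobj C₀ : C)
    (f : A ⟶ B₁ ⊞ B₂) (g : B₁ ⊞ B₂ ⟶ Cobj) (h : Cobj ⟶ A⟦(1 : ℤ)⟧)
    (hT : Triangle.mk f g h ∈ distTriang C)
    (j : Cobj ⟶ C₀) (δ : C₀ ⟶ B₁⟦(1 : ℤ)⟧)
    (hT₀ : Triangle.mk (biprod.inl ≫ g) j δ ∈ distTriang C) :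
    ∃ (v : B₂ ⟶ C₀) (w : C₀ ⟶ A⟦(1 : ℤ)⟧),
      Triangle.mk (f ≫ biprod.snd) v w ∈ distTriang C :=
  Triangulated.exists_distTriang_mk_comp_of_octahedron hT
    (binaryBiproductTriangle_distinguished B₁ B₂) hT₀
end

section
/- With notation as above (0 → K → E → F → 0, E extended from A, at : K → Ω_{B/A}⊗F the reduced Atiyah class), the diagram 0 → K → E ⊕ (Ω_{B/A}⊗F) → P¹⊗F → 0 is a short exact sequence, where the first map is k ↦ (incl(k), −at(k)) and the second map is (e, ω) ↦ (quotient∘σ)(e) + incl(ω). Consequently, the pushout of the sequence 0 → K → E → F → 0 along at : K → Ω_{B/A}⊗F is the principal parts sequence 0 → Ω_{B/A}⊗F → P¹⊗F → F → 0; i.e., At(F) = δ(at) where δ : Hom(K, Ω⊗F) → Ext¹(F, Ω⊗F) is the connecting map. -/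
open TensorProduct

/-- The module `P¹_{B/A} = (B ⊗_A B)/I²` of first-order principal parts (a type synonym,
so that we may endow it with the *right* `B`-module structure below). -/
def P1 (R S : Type*) [CommRing R] [CommRing S] [Algebra R S] : Type _ :=
  (S ⊗[R] S) ⧸ (KaehlerDifferential.ideal R S ^ 2)

noncomputable instance (R S : Type*) [CommRing R] [CommRing S] [Algebra R S] :
    CommRing (P1 R S) :=
  inferInstanceAs (CommRing ((S ⊗[R] S) ⧸ (KaehlerDifferential.ideal R S ^ 2)))

/-- The quotient map `B ⊗_A B → P¹_{B/A}`. -/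
noncomputable def toP1 (R S : Type*) [CommRing R] [CommRing S] [Algebra R S] :
    S ⊗[R] S →+* P1 R S :=
  Ideal.Quotient.mk (KaehlerDifferential.ideal R S ^ 2)

/-- The *right* `B`-module (indeed `B`-algebra) structure on `P¹_{B/A}`, via `j₂(x) = 1 ⊗ x`. -/
noncomputable instance (R S : Type*) [CommRing R] [CommRing S] [Algebra R S] :
    Algebra S (P1 R S) :=
  ((toP1 R S).comp
    (Algebra.TensorProduct.includeRight (R := R) (A := S) (B := S)).toRingHom).toAlgebra

/-- With notation as in the construction of the reduced Atiyah class
(`0 → K → E → F → 0` a short exact sequence of `B`-modules with `E = B ⊗_A E₀` extended from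
`A`, `σ` the canonical splitting `E → P¹ ⊗ E`, and `at : K → Ω_{B/A} ⊗ F` the reduced Atiyah
class, where `Ω_{B/A} ⊗ F` is realized as the kernel of the projection `P¹ ⊗ F → F`), the
sequence `0 → K → E ⊕ (Ω_{B/A} ⊗ F) → P¹ ⊗ F → 0` is short exact, where the first map is
`k ↦ (incl k, −at k)` and the second is `(e, ω) ↦ (σ followed by P¹ ⊗ E → P¹ ⊗ F)(e) + ω`.
Consequently, the pushout of `0 → K → E → F → 0` along `at` is the principal parts sequence
`0 → Ω_{B/A} ⊗ F → P¹ ⊗ F → F → 0`, i.e. `At(F) = δ(at)` for the connecting map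
`δ : Hom(K, Ω ⊗ F) → Ext¹(F, Ω ⊗ F)`. -/
theorem stmt16 (R S E₀ K F : Type*) [CommRing R] [CommRing S] [Algebra R S]
    [AddCommGroup E₀] [Module R E₀]
    [AddCommGroup K] [Module S K] [AddCommGroup F] [Module S F]
    (ι : K →ₗ[S] S ⊗[R] E₀) (g : (S ⊗[R] E₀) →ₗ[S] F)
    (hι : Function.Injective ι) (hg : Function.Surjective g)
    (hexact : Function.Exact ι g)
    (σ : (S ⊗[R] E₀) →+ (P1 R S ⊗[S] (S ⊗[R] E₀)))
    (hσ : ∀ (b : S) (e₀ : E₀),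
      σ (b ⊗ₜ[R] e₀) = (toP1 R S (b ⊗ₜ[R] (1 : S))) ⊗ₜ[S] ((1 : S) ⊗ₜ[R] e₀))
    (p : P1 R S →ₗ[S] S)
    (hp : ∀ z : S ⊗[R] S, p (toP1 R S z) = Algebra.TensorProduct.lmul' (S := S) R z)
    (hseq : Function.Exact
      (LinearMap.ker ((TensorProduct.lid S F).toLinearMap ∘ₗ LinearMap.rTensor F p)).subtype
      ((TensorProduct.lid S F).toLinearMap ∘ₗ LinearMap.rTensor F p))
    (att : K →ₗ[S]
      LinearMap.ker ((TensorProduct.lid S F).toLinearMap ∘ₗ LinearMap.rTensor F p))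
    (hatt : ∀ kk : K,
      ((att kk : P1 R S ⊗[S] F)) = LinearMap.lTensor (P1 R S) g (σ (ι kk))) :
    Function.Injective (fun kk : K => (ι kk, -att kk)) ∧
    Function.Exact (fun kk : K => (ι kk, -att kk))
      (fun en : (S ⊗[R] E₀) ×
          LinearMap.ker ((TensorProduct.lid S F).toLinearMap ∘ₗ LinearMap.rTensor F p) =>
        LinearMap.lTensor (P1 R S) g (σ en.1) + (en.2 : P1 R S ⊗[S] F)) ∧
    Function.Surjective
      (fun en : (S ⊗[R] E₀) ×
          LinearMap.ker ((TensorProduct.lid S F).toLinearMap ∘ₗ LinearMap.rTensor F p) =>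
        LinearMap.lTensor (P1 R S) g (σ en.1) + (en.2 : P1 R S ⊗[S] F)) := by
  have key : ∀ e : S ⊗[R] E₀,
      ((TensorProduct.lid S F).toLinearMap ∘ₗ LinearMap.rTensor F p)
        (LinearMap.lTensor (P1 R S) g (σ e)) = g e := by
    intro e
    induction e using TensorProduct.induction_on with
    | zero => simp
    | tmul b e₀ =>
        rw [hσ]
        simp only [LinearMap.lTensor_tmul, LinearMap.coe_comp, Function.comp_apply,
          LinearMap.rTensor_tmul, LinearEquiv.coe_coe, TensorProduct.lid_tmul, hp,
          Algebra.TensorProduct.lmul'_apply_tmul, mul_one]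
        rw [← map_smul]
        congr 1
        rw [TensorProduct.smul_tmul']
        simp
    | add x y hx hy => rw [map_add σ, map_add, map_add, hx, hy, ← map_add]
  refine ⟨?_, ?_, ?_⟩
  · intro k1 k2 h
    exact hι (congrArg Prod.fst h)
  · intro ⟨e, ω⟩
    constructor
    · intro h
      simp only at h
      have hω : ((TensorProduct.lid S F).toLinearMap ∘ₗ LinearMap.rTensor F p)
          (ω : P1 R S ⊗[S] F) = 0 := ω.2
      have hge : g e = 0 := by
        have := congrArg ((TensorProduct.lid S F).toLinearMap ∘ₗ LinearMap.rTensor F p) h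
        rw [map_add, key, hω, add_zero, map_zero] at this
        exact this
      obtain ⟨k, hk⟩ := (hexact e).mp hge
      refine ⟨k, ?_⟩
      have hωv : (ω : P1 R S ⊗[S] F) = -(att k : P1 R S ⊗[S] F) := by
        rw [hatt, hk]
        exact eq_neg_of_add_eq_zero_right h
      exact Prod.ext hk (Subtype.ext (by rw [hωv]; simp))
    · rintro ⟨k, hk⟩
      rw [← hk]
      show LinearMap.lTensor (P1 R S) g (σ (ι k)) + ((-(att k) : _) : P1 R S ⊗[S] F) = 0
      simp [hatt]
  · intro z
    obtain ⟨e, he⟩ := hg (((TensorProduct.lid S F).toLinearMap ∘ₗ LinearMap.rTensor F p) z)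
    have hz : ((TensorProduct.lid S F).toLinearMap ∘ₗ LinearMap.rTensor F p)
        (z - LinearMap.lTensor (P1 R S) g (σ e)) = 0 := by
      rw [map_sub, key, he, sub_self]
    exact ⟨(e, ⟨z - LinearMap.lTensor (P1 R S) g (σ e), hz⟩), by simp⟩
end
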